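/- Let H be a Hopf algebra and R a unital right partial H-comodule algebra with coaction ρ. If x ∈ R^{pcoH} is invertible in R, then x^{-1} ∈ R^{pcoH}. -/
import Mathlib


open TensorProduct

noncomputable section

variable (k : Type*) [Field k]

/-- A (right) partial `H`-comodule algebra structure on a unital algebra `R`:
`(id ⊗ ε)∘ρ = id`, `ρ(xy) = ρ(x)ρ(y)` and
`(ρ ⊗ id)(ρ(x)) = [ρ(1) ⊗ 1][(id ⊗ Δ)(ρ(x))]`. -/
structure PartialComoduleAlgebra (H R : Type*) [Ring H] [HopfAlgebra k H]
    [Ring R] [Algebra k R] where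
  coact : R →ₗ[k] R ⊗[k] H
  counit_coact : ∀ x : R,
    (TensorProduct.rid k R) ((TensorProduct.map LinearMap.id Coalgebra.counit) (coact x)) = x
  coact_mul : ∀ x y : R, coact (x * y) = coact x * coact y
  coassoc : ∀ x : R,
    (TensorProduct.map coact LinearMap.id) (coact x) =
      (coact 1 ⊗ₜ[k] (1 : H)) *
        ((TensorProduct.assoc k R H H).symm
          ((TensorProduct.map LinearMap.id Coalgebra.comul) (coact x)))

variable {H R : Type*} [Ring H] [HopfAlgebra k H] [Ring R] [Algebra k R]

/-- The set of coinvariant elements `R^{pcoH} = {x | ρ(x) = (x ⊗ 1) ρ(1)}`. -/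
def pcoInvSet (ρ : PartialComoduleAlgebra k H R) : Set R :=
  {x : R | ρ.coact x = (x ⊗ₜ[k] (1 : H)) * ρ.coact 1}

/-- If a coinvariant element is invertible in `R`, then its inverse is again coinvariant. -/
theorem inv_mem_pcoInvSet (ρ : PartialComoduleAlgebra k H R) (u : Rˣ)
    (hu : (u : R) ∈ pcoInvSet k ρ) :
    ((u⁻¹ : Rˣ) : R) ∈ pcoInvSet k ρ := by
  have hu' : ρ.coact (u : R) = ((u : R) ⊗ₜ[k] (1 : H)) * ρ.coact 1 := hu
  have h0 : ρ.coact (u : R) * ρ.coact ((u⁻¹ : Rˣ) : R) = ρ.coact 1 := by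
    rw [← ρ.coact_mul, Units.mul_inv]
  have h1 : ρ.coact 1 * ρ.coact ((u⁻¹ : Rˣ) : R) = ρ.coact ((u⁻¹ : Rˣ) : R) := by
    rw [← ρ.coact_mul, one_mul]
  have h2 : ((u : R) ⊗ₜ[k] (1 : H)) * ρ.coact ((u⁻¹ : Rˣ) : R) = ρ.coact 1 := by
    rw [hu', mul_assoc, h1] at h0
    exact h0
  show ρ.coact ((u⁻¹ : Rˣ) : R) = (((u⁻¹ : Rˣ) : R) ⊗ₜ[k] (1 : H)) * ρ.coact 1
  calc ρ.coact ((u⁻¹ : Rˣ) : R)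
      = ((((u⁻¹ : Rˣ) : R) * (u : R)) ⊗ₜ[k] ((1 : H) * 1)) *
          ρ.coact ((u⁻¹ : Rˣ) : R) := by
        rw [Units.inv_mul, one_mul, ← Algebra.TensorProduct.one_def, one_mul]
    _ = (((u⁻¹ : Rˣ) : R) ⊗ₜ[k] (1 : H)) * (((u : R) ⊗ₜ[k] (1 : H)) *
          ρ.coact ((u⁻¹ : Rˣ) : R)) := by
        rw [← mul_assoc, Algebra.TensorProduct.tmul_mul_tmul]
    _ = (((u⁻¹ : Rˣ) : R) ⊗ₜ[k] (1 : H)) * ρ.coact 1 := by rw [h2]
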